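/- arXiv:math/0401041 — 2 statements merged into one kernel-verified Lean document; each statement's English description precedes it below -/
import Mathlib

section
/- Let S_n(t) = S_{⌊nt⌋}/(nμ) and N_n(t) = N(nμt)/n, where S_k are partial sums of positive i.i.d. random variables with mean μ > 0 and N is the associated renewal process N(t) = min{n ≥ 1 : S_n > t}. Writing S̄_n(t) = S_n(t) - t and N̄_n(t) = N_n(t) - t, one has the pathwise identity V_n(t) := ∫_0^t (S̄_n(s) + N̄_n(s)) ds = A_n(t) - S̄_n(t) N̄_n(t) - (1/2) N̄_n(t)², where A_n(t) = ∫_{N_n(t)}^{t} (S̄_n(s) - S̄_n(t)) ds. -/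
open MeasureTheory Filter

/-- Pathwise representation of the Vervaat-type process for ordinary renewals: with
`S̄_n(s) = S_{⌊ns⌋}/(nμ) - s`, `N̄_n(s) = N(nμs)/n - s` built from strictly increasing
partial sums `S` (positive increments) and the renewal process
`N(x) = min {k ≥ 1 : S_k > x}`, one has for `t ∈ [0,1]`:
`V_n(t) = ∫_0^t (S̄_n + N̄_n) = A_n(t) - S̄_n(t) N̄_n(t) - (1/2) N̄_n(t)²`,
where `A_n(t) = ∫_{N_n(t)}^t (S̄_n(s) - S̄_n(t)) ds`. -/
theorem vervaat_representation_ordinary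
    (μ : ℝ) (hμ : 0 < μ)
    (S : ℕ → ℝ) (hS0 : S 0 = 0) (hSmono : StrictMono S) (htop : Tendsto S atTop atTop)
    (N : ℝ → ℕ) (hN : ∀ x : ℝ, N x = sInf {k : ℕ | 1 ≤ k ∧ x < S k})
    (n : ℕ) (hn : 1 ≤ n)
    (Sbar Nbar Nn : ℝ → ℝ)
    (hSbar : ∀ s : ℝ, Sbar s = S ⌊(n : ℝ) * s⌋₊ / ((n : ℝ) * μ) - s)
    (hNn : ∀ s : ℝ, Nn s = (N ((n : ℝ) * μ * s) : ℝ) / (n : ℝ))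
    (hNbar : ∀ s : ℝ, Nbar s = Nn s - s)
    (t : ℝ) (ht : t ∈ Set.Icc (0 : ℝ) 1) :
    (∫ s in (0 : ℝ)..t, (Sbar s + Nbar s)) =
      (∫ s in (Nn t)..t, (Sbar s - Sbar t)) - Sbar t * Nbar t - (1 / 2) * (Nbar t) ^ 2 := by
  obtain ⟨ht0, ht1⟩ := ht
  have hn0 : (0:ℝ) < n := by exact_mod_cast hn
  have hnμ : (0:ℝ) < (n:ℝ) * μ := by positivity
  -- the defining set of N is nonempty
  have hne : ∀ x : ℝ, {k : ℕ | 1 ≤ k ∧ x < S k}.Nonempty := by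
    intro x
    obtain ⟨k, hk1, hk2⟩ :=
      ((htop.eventually (eventually_gt_atTop x)).and (eventually_ge_atTop 1)).exists
    exact ⟨k, hk2, hk1⟩
  have hNmem : ∀ x : ℝ, 1 ≤ N x ∧ x < S (N x) := by
    intro x
    have := Nat.sInf_mem (hne x)
    rw [← hN x] at this
    exact this
  -- N is constant on [S m, S (m+1))
  have hNconst : ∀ (m : ℕ) (u : ℝ), S m ≤ u → u < S (m+1) → N u = m + 1 := by
    intro m u h1 h2
    rw [hN u]
    refine le_antisymm (Nat.sInf_le ⟨by omega, h2⟩) ?_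
    refine le_csInf (hne u) ?_
    rintro k ⟨hk1, hk2⟩
    by_contra hlt
    push_neg at hlt
    have : S k ≤ S m := hSmono.monotone (by omega)
    linarith
  -- monotonicity of N
  have hNmono : Monotone (fun x : ℝ => (N x : ℝ)) := by
    intro x y hxy
    have h1 : N x ≤ N y := by
      rw [hN x, hN y]
      refine Nat.sInf_le ?_
      have := Nat.sInf_mem (hne y)
      exact ⟨this.1, lt_of_le_of_lt hxy this.2⟩
    exact Nat.cast_le.mpr h1
  -- monotonicity of the rescaled partial-sum process
  have hSnmono : Monotone (fun s : ℝ => S ⌊(n:ℝ)*s⌋₊) := by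
    intro x y hxy
    exact hSmono.monotone (Nat.floor_mono (by nlinarith))
  have hid : ∀ a b : ℝ, IntervalIntegrable (fun s : ℝ => s) volume a b :=
    fun a b => Continuous.intervalIntegrable continuous_id a b
  have hNint : ∀ a b : ℝ, IntervalIntegrable (fun x => (N x : ℝ)) volume a b :=
    fun a b => (hNmono.monotoneOn _).intervalIntegrable
  have hSnint : ∀ a b : ℝ, IntervalIntegrable (fun s : ℝ => S ⌊(n:ℝ)*s⌋₊) volume a b :=
    fun a b => (hSnmono.monotoneOn _).intervalIntegrable
  -- integral of a function constant on [a, b)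
  have stepInt : ∀ (f : ℝ → ℝ) (a b c : ℝ), a ≤ b → (∀ u ∈ Set.Ico a b, f u = c) →
      ∫ u in a..b, f u = c * (b - a) := by
    intro f a b c hab h
    rw [intervalIntegral.integral_of_le hab, MeasureTheory.integral_Ioc_eq_integral_Ioo,
      ← MeasureTheory.integral_Ico_eq_integral_Ioo,
      MeasureTheory.setIntegral_congr_fun measurableSet_Ico h]
    simp [Real.volume_Ico, ENNReal.toReal_ofReal (sub_nonneg.mpr hab), mul_comm, hab]
  -- key renewal integral identity, on [S m, S (m+1)]
  have keyA : ∀ m : ℕ, ∀ T : ℝ, S m ≤ T → T ≤ S (m+1) →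
      ∫ u in (0:ℝ)..T, (N u : ℝ) = (m+1) * T - ∑ k ∈ Finset.range (m+1), S k := by
    intro m
    induction m with
    | zero =>
      intro T h1 h2
      rw [hS0] at h1
      rw [stepInt _ 0 T 1 h1 ?_]
      · simp [hS0]
      · rintro u ⟨hu1, hu2⟩
        have : N u = 1 := hNconst 0 u (by rwa [hS0]) (lt_of_lt_of_le hu2 h2)
        simp [this]
    | succ m ih =>
      intro T h1 h2
      have hle : S (m+1) ≤ T := h1
      have hprev : S m ≤ S (m+1) := (hSmono (Nat.lt_succ_self m)).le
      rw [← intervalIntegral.integral_add_adjacent_intervals (hNint 0 (S (m+1))) (hNint (S (m+1)) T)]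
      rw [ih (S (m+1)) hprev le_rfl]
      rw [stepInt _ (S (m+1)) T ((m:ℝ)+1+1) hle ?_]
      · rw [Finset.sum_range_succ (f := S) (n := m+1)]
        push_cast
        ring
      · rintro u ⟨hu1, hu2⟩
        have : N u = m + 2 := hNconst (m+1) u hu1 (lt_of_lt_of_le hu2 h2)
        rw [this]; push_cast; ring
  -- key renewal integral identity for arbitrary T ≥ 0
  have keyA' : ∀ T : ℝ, 0 ≤ T →
      ∫ u in (0:ℝ)..T, (N u : ℝ) = (N T : ℝ) * T - ∑ k ∈ Finset.range (N T), S k := by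
    intro T hT
    obtain ⟨hNT1, hNT2⟩ := hNmem T
    obtain ⟨m, hm⟩ : ∃ m, N T = m + 1 := ⟨N T - 1, by omega⟩
    have hub : S m ≤ T := by
      rcases Nat.eq_zero_or_pos m with h0 | hpos
      · rw [h0, hS0]; exact hT
      · by_contra h
        push_neg at h
        have hmem : m ∈ {k : ℕ | 1 ≤ k ∧ T < S k} := ⟨hpos, h⟩
        have := Nat.sInf_le hmem
        rw [← hN T] at this
        omega
    rw [hm] at hNT2 ⊢
    push_cast
    exact keyA m T hub hNT2.le
  -- integral of the step partial-sum process up to m/n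
  have keyB : ∀ m : ℕ, ∫ s in (0:ℝ)..((m:ℝ)/n), (S ⌊(n:ℝ)*s⌋₊ : ℝ)
      = (∑ k ∈ Finset.range m, S k) / n := by
    intro m
    induction m with
    | zero => simp
    | succ m ih =>
      have hstep : ((m:ℝ)/n) ≤ ((m:ℝ)+1)/n := by
        gcongr
        linarith
      rw [show ((m+1:ℕ):ℝ)/n = ((m:ℝ)+1)/n by push_cast; ring]
      rw [← intervalIntegral.integral_add_adjacent_intervals (hSnint 0 ((m:ℝ)/n))
        (hSnint ((m:ℝ)/n) (((m:ℝ)+1)/n))]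
      rw [ih, stepInt _ ((m:ℝ)/n) (((m:ℝ)+1)/n) (S m) hstep ?_]
      · rw [Finset.sum_range_succ]
        field_simp
        ring
      · rintro u ⟨hu1, hu2⟩
        have h1 : (m:ℝ) ≤ (n:ℝ) * u := by
          rw [div_le_iff₀ hn0] at hu1; linarith [hu1]
        have h2 : (n:ℝ) * u < (m:ℝ) + 1 := by
          rw [lt_div_iff₀ hn0] at hu2; linarith [hu2]
        have : ⌊(n:ℝ)*u⌋₊ = m := by
          rw [Nat.floor_eq_iff (le_trans (Nat.cast_nonneg m) h1)]
          exact ⟨h1, h2⟩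
        rw [this]
  -- notation
  set T : ℝ := (n:ℝ) * μ * t with hT
  have hT0 : 0 ≤ T := by positivity
  set m' : ℕ := N T with hm'
  set σ : ℝ := ∑ k ∈ Finset.range m', S k with hσ
  have ha : Nn t = (m' : ℝ) / n := by rw [hNn]
  -- compute ∫₀ᵗ Nn
  have hI2 : ∫ s in (0:ℝ)..t, Nn s = (m' : ℝ) / n * t - σ / ((n:ℝ)^2 * μ) := by
    have : ∀ s : ℝ, Nn s = (N ((n:ℝ)*μ*s) : ℝ) / n := hNn
    calc ∫ s in (0:ℝ)..t, Nn s
        = ∫ s in (0:ℝ)..t, (N ((n:ℝ)*μ*s) : ℝ) / n := by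
          exact intervalIntegral.integral_congr (fun s _ => hNn s)
      _ = (∫ s in (0:ℝ)..t, (N ((n:ℝ)*μ*s) : ℝ)) / n := by
          rw [intervalIntegral.integral_div]
      _ = (((n:ℝ)*μ)⁻¹ • ∫ u in ((n:ℝ)*μ*0)..((n:ℝ)*μ*t), (N u : ℝ)) / n := by
          rw [intervalIntegral.integral_comp_mul_left (fun u => (N u : ℝ)) hnμ.ne']
      _ = (m' : ℝ) / n * t - σ / ((n:ℝ)^2 * μ) := by
          rw [mul_zero, keyA' T hT0, ← hm', ← hσ, hT, smul_eq_mul]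
          field_simp
  -- compute ∫₀^{Nn t} of the step process
  have hIB : ∫ s in (0:ℝ)..(Nn t), (S ⌊(n:ℝ)*s⌋₊ / ((n:ℝ)*μ)) = σ / ((n:ℝ)^2 * μ) := by
    rw [ha, intervalIntegral.integral_div, keyB m', div_div]
    congr 1
    ring
  -- integrability facts
  have hSbarInt : ∀ a b : ℝ, IntervalIntegrable Sbar volume a b := by
    intro a b
    have : Sbar = fun s => S ⌊(n:ℝ)*s⌋₊ / ((n:ℝ)*μ) - s := funext hSbar
    rw [this]
    exact (((hSnint a b).div_const _)).sub (hid _ _)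
  have hNbarInt : ∀ a b : ℝ, IntervalIntegrable Nbar volume a b := by
    intro a b
    have h1 : IntervalIntegrable Nn volume a b := by
      have : Nn = fun s => (N ((n:ℝ)*μ*s) : ℝ) / n := funext hNn
      rw [this]
      have hm : Monotone (fun s : ℝ => (N ((n:ℝ)*μ*s) : ℝ)) := by
        intro x y hxy
        exact hNmono (by nlinarith)
      exact (hm.monotoneOn _).intervalIntegrable.div_const _
    have : Nbar = fun s => Nn s - s := funext hNbar
    rw [this]
    exact h1.sub (hid _ _)
  -- decompose LHS
  have hLHS : (∫ s in (0:ℝ)..t, (Sbar s + Nbar s))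
      = (∫ s in (0:ℝ)..t, Sbar s) + ((m' : ℝ) / n * t - σ / ((n:ℝ)^2 * μ)) - t^2/2 := by
    rw [intervalIntegral.integral_add (hSbarInt 0 t) (hNbarInt 0 t)]
    have : (∫ s in (0:ℝ)..t, Nbar s) = (∫ s in (0:ℝ)..t, Nn s) - ∫ s in (0:ℝ)..t, s := by
      rw [← intervalIntegral.integral_sub ?h1 (hid _ _)]
      · exact intervalIntegral.integral_congr (fun s _ => hNbar s)
      · have h1 : IntervalIntegrable Nn volume 0 t := by
          have := hNbarInt 0 t
          have h2 : Nn = fun s => Nbar s + s := by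
            funext s; rw [hNbar]; ring
          rw [h2]
          exact this.add (hid _ _)
        exact h1
    rw [this, hI2, integral_id]
    ring
  -- decompose the A_n integral
  have hRHS : (∫ s in (Nn t)..t, (Sbar s - Sbar t))
      = (∫ s in (0:ℝ)..t, Sbar s) - σ / ((n:ℝ)^2 * μ) + (Nn t)^2/2
        - Sbar t * (t - Nn t) := by
    have hsplit : (∫ s in (0:ℝ)..t, Sbar s)
        = (∫ s in (0:ℝ)..(Nn t), Sbar s) + ∫ s in (Nn t)..t, Sbar s :=
      (intervalIntegral.integral_add_adjacent_intervals (hSbarInt 0 (Nn t)) (hSbarInt (Nn t) t)).symm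
    have h0a : (∫ s in (0:ℝ)..(Nn t), Sbar s)
        = σ / ((n:ℝ)^2 * μ) - (Nn t)^2/2 := by
      calc (∫ s in (0:ℝ)..(Nn t), Sbar s)
          = ∫ s in (0:ℝ)..(Nn t), (S ⌊(n:ℝ)*s⌋₊ / ((n:ℝ)*μ) - s) :=
            intervalIntegral.integral_congr (fun s _ => hSbar s)
        _ = (∫ s in (0:ℝ)..(Nn t), S ⌊(n:ℝ)*s⌋₊ / ((n:ℝ)*μ)) - ∫ s in (0:ℝ)..(Nn t), s := by
            exact intervalIntegral.integral_sub ((hSnint 0 (Nn t)).div_const _) (hid _ _)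
        _ = σ / ((n:ℝ)^2 * μ) - (Nn t)^2/2 := by rw [hIB, integral_id]; ring
    have hsub : (∫ s in (Nn t)..t, (Sbar s - Sbar t))
        = (∫ s in (Nn t)..t, Sbar s) - (t - Nn t) * Sbar t := by
      rw [intervalIntegral.integral_sub (hSbarInt (Nn t) t) intervalIntegrable_const,
        intervalIntegral.integral_const, smul_eq_mul]
    rw [hsub]
    have : (∫ s in (Nn t)..t, Sbar s) = (∫ s in (0:ℝ)..t, Sbar s) - (∫ s in (0:ℝ)..(Nn t), Sbar s) := by
      rw [hsplit]; ring
    rw [this, h0a]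
    ring
  rw [hLHS, hRHS, hNbar t, ha]
  ring
end

section
/- With the notation of the previous representation, for arbitrary (not necessarily positive) i.i.d. X_i with mean μ > 0, the Vervaat-type process satisfies V_n(t) = A_n(t) + B_n(t) - (1/2) M_n(t)² + (1/2) S̄_n(t)², where M_n = S̄_n + N̄_n, A_n(t) = ∫_{N_n(t)}^t (S̄_n(s) - S̄_n(t)) ds, and B_n(t) = (1/(n²μ)) ∑_{i=1}^{N_H(nμt)} ∑_{j=1}^{ν_i - ν_{i-1} - 1} (ν_i - ν_{i-1} - j) X_{ν_{i-1}+j}, with ν_i the strong ascending ladder indices of (S_k) and N_H the renewal process of the ladder heights. -/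
open MeasureTheory Filter

private lemma stepIntegral {f : ℝ → ℝ} {u v C : ℝ} (huv : u ≤ v)
    (h : ∀ s ∈ Set.Ioo u v, f s = C) :
    ∫ s in u..v, f s = (v - u) * C := by
  rw [intervalIntegral.integral_of_le huv, integral_Ioc_eq_integral_Ioo,
    setIntegral_congr_fun measurableSet_Ioo h, setIntegral_const,
    Real.volume_real_Ioo_of_le huv, smul_eq_mul]

private lemma stepIntegrable {f : ℝ → ℝ} {u v C : ℝ} (huv : u ≤ v)
    (h : ∀ s ∈ Set.Ioo u v, f s = C) :
    IntervalIntegrable f volume u v := by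
  rw [intervalIntegrable_iff_integrableOn_Ioo_of_le huv]
  exact (integrableOn_congr_fun h measurableSet_Ioo).2
    (integrableOn_const measure_Ioo_lt_top.ne)

private lemma tele {S X : ℕ → ℝ} (hSX : ∀ k : ℕ, S (k + 1) = S k + X (k + 1)) :
    ∀ m L : ℕ, S (m + L) - S m = ∑ j ∈ Finset.Icc 1 L, X (m + j) := by
  intro m L
  induction L with
  | zero => simp
  | succ L ih =>
      rw [Finset.sum_Icc_succ_top (by omega), ← ih, show m + (L+1) = (m + L) + 1 by omega,
        hSX (m + L), show m + L + 1 = m + (L+1) by omega]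
      ring

private lemma blockId {S X : ℕ → ℝ} (hSX : ∀ k : ℕ, S (k + 1) = S k + X (k + 1)) :
    ∀ m L : ℕ, ∑ r ∈ Finset.range L, (S (m + r) - S m)
      = ∑ j ∈ Finset.Icc 1 (L - 1), ((L : ℝ) - (j : ℝ)) * X (m + j) := by
  intro m L
  induction L with
  | zero => simp
  | succ L ih =>
      rw [Finset.sum_range_succ, ih, tele hSX m L]
      rcases Nat.eq_zero_or_pos L with hL | hL
      · subst hL; simp
      · have h1 : L - 1 + 1 = L := Nat.succ_pred_eq_of_pos hL
        have h3 := Finset.sum_Icc_succ_top (by omega : 1 ≤ (L-1)+1)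
          (fun j => ((L : ℝ) - (j : ℝ)) * X (m + j))
        rw [h1] at h3
        have h4 : ((L:ℝ) - (L:ℕ)) * X (m + L) = 0 := by simp
        have h5 : (L + 1 : ℕ) - 1 = L := by omega
        rw [h5, show (∑ j ∈ Finset.Icc 1 (L-1), ((L : ℝ) - (j:ℝ)) * X (m + j))
            = ∑ j ∈ Finset.Icc 1 L, ((L : ℝ) - (j:ℝ)) * X (m + j) from by rw [h3, h4, add_zero],
          ← Finset.sum_add_distrib]
        apply Finset.sum_congr rfl
        intro j hj
        push_cast
        ring

private lemma abelSum (a w : ℕ → ℝ) :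
    ∀ J : ℕ, ∑ k ∈ Finset.range (J+1), (a (k+1) - a k) * w (k+1)
      = a (J+1) * w (J+1) - a 0 * w 1 + ∑ k ∈ Finset.Icc 1 J, a k * (w k - w (k+1)) := by
  intro J
  induction J with
  | zero => simp; ring
  | succ J ih =>
      rw [Finset.sum_range_succ, ih, Finset.sum_Icc_succ_top (by omega : 1 ≤ J+1)]
      ring

private lemma keyId {S X : ℕ → ℝ} {ν : ℕ → ℕ}
    (hS0 : S 0 = 0) (hSX : ∀ k : ℕ, S (k + 1) = S k + X (k + 1)) (hν0 : ν 0 = 0)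
    (hlt : ∀ i, ν i < ν (i+1)) :
    ∀ J : ℕ, (∑ k ∈ Finset.range (ν J), S k)
        + ∑ k ∈ Finset.Icc 1 (J-1), S (ν k) * ((ν k : ℝ) - (ν (k+1) : ℝ))
      = ∑ i ∈ Finset.Icc 1 J, ∑ j ∈ Finset.Icc 1 (ν i - ν (i-1) - 1),
          ((ν i : ℝ) - (ν (i-1) : ℝ) - (j : ℝ)) * X (ν (i-1) + j) := by
  intro J
  induction J with
  | zero => simp [hν0]
  | succ J ih =>
      have hL : ν J ≤ ν (J+1) := (hlt J).le
      have hν1 : ν (J+1) = ν J + (ν (J+1) - ν J) := by omega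
      have e1 : ∑ k ∈ Finset.range (ν (J+1)), S k
          = ∑ k ∈ Finset.range (ν J), S k
            + ∑ r ∈ Finset.range (ν (J+1) - ν J), S (ν J + r) := by
        rw [hν1, Finset.sum_range_add]
        simp
      have e2 : ∑ k ∈ Finset.Icc 1 ((J+1)-1), S (ν k) * ((ν k : ℝ) - (ν (k+1) : ℝ))
          = (∑ k ∈ Finset.Icc 1 (J-1), S (ν k) * ((ν k : ℝ) - (ν (k+1) : ℝ)))
            + S (ν J) * ((ν J : ℝ) - (ν (J+1) : ℝ)) := by
        rcases Nat.eq_zero_or_pos J with rfl | hJ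
        · simp [hν0, hS0]
        · have h1 : J - 1 + 1 = J := Nat.succ_pred_eq_of_pos hJ
          have h3 := Finset.sum_Icc_succ_top (by omega : 1 ≤ (J-1)+1)
            (fun k => S (ν k) * ((ν k : ℝ) - (ν (k+1) : ℝ)))
          rw [h1] at h3
          simpa using h3
      have e3 : ∑ i ∈ Finset.Icc 1 (J+1), ∑ j ∈ Finset.Icc 1 (ν i - ν (i-1) - 1),
            ((ν i : ℝ) - (ν (i-1) : ℝ) - (j : ℝ)) * X (ν (i-1) + j)
          = (∑ i ∈ Finset.Icc 1 J, ∑ j ∈ Finset.Icc 1 (ν i - ν (i-1) - 1),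
              ((ν i : ℝ) - (ν (i-1) : ℝ) - (j : ℝ)) * X (ν (i-1) + j))
            + ∑ j ∈ Finset.Icc 1 (ν (J+1) - ν J - 1),
              ((ν (J+1) : ℝ) - (ν J : ℝ) - (j : ℝ)) * X (ν J + j) := by
        rw [Finset.sum_Icc_succ_top (by omega : 1 ≤ J+1)]
        simp
      have e4 : ∑ j ∈ Finset.Icc 1 (ν (J+1) - ν J - 1),
            ((ν (J+1) : ℝ) - (ν J : ℝ) - (j : ℝ)) * X (ν J + j)
          = (∑ r ∈ Finset.range (ν (J+1) - ν J), S (ν J + r))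
            + S (ν J) * ((ν J : ℝ) - (ν (J+1) : ℝ)) := by
        have hb := blockId hSX (ν J) (ν (J+1) - ν J)
        have hcast : ((ν (J+1) - ν J : ℕ) : ℝ) = (ν (J+1) : ℝ) - (ν J : ℝ) :=
          Nat.cast_sub hL
        rw [hcast] at hb
        rw [← hb, Finset.sum_sub_distrib, Finset.sum_const, Finset.card_range,
          nsmul_eq_mul, hcast]
        ring
      rw [e1, e2, e3, e4]
      linarith [ih]



/-- Pathwise representation of the Vervaat-type process for general renewals: with the
ladder indices `ν_i` of the walk `S`, the ladder-height renewal process `N_H`, the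
processes `S̄_n(s) = S_{⌊ns⌋}/(nμ) - s`, `N̄_n(s) = N(nμs)/n - s`, `M_n = S̄_n + N̄_n`,
`A_n(t) = ∫_{N_n(t)}^t (S̄_n(s) - S̄_n(t)) ds` and
`B_n(t) = (1/(n²μ)) ∑_{i=1}^{N_H(nμt)} ∑_{j=1}^{ν_i - ν_{i-1} - 1} (ν_i - ν_{i-1} - j) X_{ν_{i-1}+j}`,
one has `V_n(t) = A_n(t) + B_n(t) - (1/2) M_n(t)² + (1/2) S̄_n(t)²` for `t ∈ [0,1]`. -/
theorem vervaat_representation_general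
    (μ : ℝ) (hμ : 0 < μ)
    (X : ℕ → ℝ) (S : ℕ → ℝ) (hS0 : S 0 = 0)
    (hSX : ∀ k : ℕ, S (k + 1) = S k + X (k + 1))
    (htop : Tendsto S atTop atTop)
    (N : ℝ → ℕ) (hN : ∀ x : ℝ, N x = sInf {k : ℕ | 1 ≤ k ∧ x < S k})
    (ν : ℕ → ℕ) (hν0 : ν 0 = 0)
    (hν : ∀ i : ℕ, ν (i + 1) = sInf {k : ℕ | ν i < k ∧ S (ν i) < S k})
    (NH : ℝ → ℕ) (hNH : ∀ x : ℝ, NH x = sInf {j : ℕ | 1 ≤ j ∧ x < S (ν j)})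
    (n : ℕ) (hn : 1 ≤ n)
    (Sbar Nbar Nn Mn : ℝ → ℝ)
    (hSbar : ∀ s : ℝ, Sbar s = S ⌊(n : ℝ) * s⌋₊ / ((n : ℝ) * μ) - s)
    (hNn : ∀ s : ℝ, Nn s = (N ((n : ℝ) * μ * s) : ℝ) / (n : ℝ))
    (hNbar : ∀ s : ℝ, Nbar s = Nn s - s)
    (hMn : ∀ s : ℝ, Mn s = Sbar s + Nbar s)
    (t : ℝ) (ht : t ∈ Set.Icc (0 : ℝ) 1) :
    (∫ s in (0 : ℝ)..t, (Sbar s + Nbar s)) =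
      (∫ s in (Nn t)..t, (Sbar s - Sbar t)) +
        (1 / ((n : ℝ) ^ 2 * μ)) *
          (∑ i ∈ Finset.Icc 1 (NH ((n : ℝ) * μ * t)),
            ∑ j ∈ Finset.Icc 1 (ν i - ν (i - 1) - 1),
              ((ν i : ℝ) - (ν (i - 1) : ℝ) - (j : ℝ)) * X (ν (i - 1) + j)) -
        (1 / 2) * (Mn t) ^ 2 + (1 / 2) * (Sbar t) ^ 2 := by
  obtain ⟨ht0, ht1⟩ := ht
  have hn0 : (0:ℝ) < (n:ℝ) := by exact_mod_cast hn
  have hc0 : (0:ℝ) < (n:ℝ) * μ := mul_pos hn0 hμ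
  -- ladder facts
  have hν_mem : ∀ i : ℕ, ν i < ν (i+1) ∧ S (ν i) < S (ν (i+1)) := by
    intro i
    have hne : {k : ℕ | ν i < k ∧ S (ν i) < S k}.Nonempty := by
      obtain ⟨k, hk1, hk2⟩ :=
        ((eventually_gt_atTop (ν i)).and (htop.eventually (eventually_gt_atTop (S (ν i))))).exists
      exact ⟨k, hk1, hk2⟩
    have h := Nat.sInf_mem hne
    rw [← hν i] at h
    exact h
  have hsm : StrictMono ν := strictMono_nat_of_lt_succ fun i => (hν_mem i).1
  have hν_min : ∀ i k, ν i < k → k < ν (i+1) → S k ≤ S (ν i) := by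
    intro i k h1 h2
    by_contra hlt
    push_neg at hlt
    have : ν (i+1) ≤ k := by rw [hν i]; exact Nat.sInf_le ⟨h1, hlt⟩
    omega
  have hblock : ∀ i, ∀ k ≤ ν i, S k ≤ S (ν i) := by
    intro i
    induction i with
    | zero => intro k hk; rw [hν0] at hk; rw [Nat.le_zero.mp hk, hν0]
    | succ i ih =>
        intro k hk
        rcases le_or_gt k (ν i) with h | h
        · exact (ih k h).trans (hν_mem i).2.le
        · rcases eq_or_lt_of_le hk with h' | h'
          · rw [h']
          · exact (hν_min i k h h').trans (hν_mem i).2.le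
  have hbelow : ∀ i k, k < ν (i+1) → S k ≤ S (ν i) := by
    intro i k hk
    rcases le_or_gt k (ν i) with h | h
    · exact hblock i k h
    · exact hν_min i k h hk
  have hHmono : ∀ {k j : ℕ}, k ≤ j → S (ν k) ≤ S (ν j) := by
    intro k j h
    exact hblock j (ν k) (hsm.monotone h)
  have hNchar : ∀ (x : ℝ) (i : ℕ), S (ν i) ≤ x → x < S (ν (i+1)) → N x = ν (i+1) := by
    intro x i h1 h2
    have hmem : ν (i+1) ∈ {k : ℕ | 1 ≤ k ∧ x < S k} :=
      ⟨by have := (hν_mem i).1; omega, h2⟩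
    have hlb : ∀ k ∈ {k : ℕ | 1 ≤ k ∧ x < S k}, ν (i+1) ≤ k := by
      rintro k ⟨hk1, hk2⟩
      by_contra hcon
      push_neg at hcon
      exact absurd hk2 (not_lt.2 ((hbelow i k hcon).trans h1))
    rw [hN x]
    exact le_antisymm (Nat.sInf_le hmem) (hlb _ (Nat.sInf_mem ⟨_, hmem⟩))
  have hNmono : Monotone N := by
    intro x y hxy
    have hne : {k : ℕ | 1 ≤ k ∧ y < S k}.Nonempty := by
      obtain ⟨k, hk1, hk2⟩ :=
        ((eventually_ge_atTop 1).and (htop.eventually (eventually_gt_atTop y))).exists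
      exact ⟨k, hk1, hk2⟩
    have hmem := Nat.sInf_mem hne
    rw [hN x, hN y]
    exact Nat.sInf_le ⟨hmem.1, lt_of_le_of_lt hxy hmem.2⟩
  -- the ladder-height renewal index
  have hH_ne : {j : ℕ | 1 ≤ j ∧ (n:ℝ) * μ * t < S (ν j)}.Nonempty := by
    obtain ⟨k, hk1, hk2⟩ :=
      ((eventually_ge_atTop 1).and (htop.eventually (eventually_gt_atTop ((n:ℝ) * μ * t)))).exists
    exact ⟨k, hk1, lt_of_lt_of_le hk2 (hblock k k hsm.le_apply)⟩
  set J := NH ((n:ℝ) * μ * t) with hJdef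
  have hJ_mem : 1 ≤ J ∧ (n:ℝ) * μ * t < S (ν J) := by
    rw [hJdef, hNH]; exact Nat.sInf_mem hH_ne
  have hJ1 : 1 ≤ J := hJ_mem.1
  have hJ_lb : ∀ k, k < J → S (ν k) ≤ (n:ℝ) * μ * t := by
    intro k hk
    rcases Nat.eq_zero_or_pos k with rfl | hk1
    · rw [hν0, hS0]; positivity
    · by_contra hcon
      push_neg at hcon
      have : J ≤ k := by rw [hJdef, hNH]; exact Nat.sInf_le ⟨hk1, hcon⟩
      omega
  have hNct : N ((n:ℝ) * μ * t) = ν J := by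
    have h1 : S (ν (J-1)) ≤ (n:ℝ) * μ * t := hJ_lb (J-1) (by omega)
    have hJ' : J - 1 + 1 = J := by omega
    have h2 := hNchar ((n:ℝ) * μ * t) (J-1) h1 (by rw [hJ']; exact hJ_mem.2)
    rwa [hJ'] at h2
  -- step-function facts for the floor process
  have floor_eq : ∀ (k : ℕ) (s : ℝ), (k:ℝ)/n < s → s < ((k:ℝ)+1)/n → ⌊(n:ℝ)*s⌋₊ = k := by
    intro k s h1 h2
    have hk1 : (k:ℝ) < (n:ℝ)*s := by rw [mul_comm]; exact (div_lt_iff₀ hn0).1 h1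
    have hk2 : (n:ℝ)*s < (k:ℝ)+1 := by rw [mul_comm]; exact (lt_div_iff₀ hn0).1 h2
    have h0 : (0:ℝ) ≤ (n:ℝ)*s := le_trans (Nat.cast_nonneg k) hk1.le
    exact (Nat.floor_eq_iff h0).2 ⟨hk1.le, hk2⟩
  have gInt0 : ∀ v : ℝ, 0 ≤ v →
      IntervalIntegrable (fun s => (S ⌊(n:ℝ)*s⌋₊ : ℝ)) volume 0 v := by
    intro v hv
    have hup : v ≤ ((⌈(n:ℝ)*v⌉₊ : ℕ):ℝ)/n := by
      rw [le_div_iff₀ hn0, mul_comm]; exact Nat.le_ceil _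
    have h := IntervalIntegrable.trans_iterate
      (f := fun s => (S ⌊(n:ℝ)*s⌋₊ : ℝ)) (μ := volume)
      (a := fun k : ℕ => min ((k:ℝ)/n) v) (n := ⌈(n:ℝ)*v⌉₊) ?_
    · have e0 : min (((0:ℕ):ℝ)/n) v = 0 := by simp [hv]
      have eM : min (((⌈(n:ℝ)*v⌉₊ : ℕ):ℝ)/n) v = v := min_eq_right hup
      rw [e0, eM] at h
      exact h
    · intro k _
      rcases le_or_gt v ((k:ℝ)/n) with hcase | hcase
      · have hmono : ((k:ℝ))/n ≤ (((k+1:ℕ)):ℝ)/n := by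
          apply (div_le_div_iff_of_pos_right hn0).2; push_cast; linarith
        have e1 : min ((k:ℝ)/n) v = v := min_eq_right hcase
        have e2 : min ((((k+1:ℕ)):ℝ)/n) v = v := min_eq_right (le_trans hcase hmono)
        simp only [e1, e2]
        exact IntervalIntegrable.refl
      · apply stepIntegrable (C := S k)
        · exact min_le_min ((div_le_div_iff_of_pos_right hn0).2 (by push_cast; linarith)) le_rfl
        · intro s hs
          have hs1 : min ((k:ℝ)/n) v < s := hs.1
          have hs2 : s < min (((k+1:ℕ):ℝ)/n) v := hs.2
          have h1 : (k:ℝ)/n < s := by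
            rw [min_eq_left hcase.le] at hs1; exact hs1
          have h2 : s < ((k:ℝ)+1)/n := lt_of_lt_of_le hs2
            (le_trans (min_le_left _ _) (by push_cast; exact le_rfl))
          show S ⌊(n:ℝ)*s⌋₊ = S k
          rw [floor_eq k s h1 h2]
  have gInt : ∀ u v : ℝ, 0 ≤ u → 0 ≤ v →
      IntervalIntegrable (fun s => (S ⌊(n:ℝ)*s⌋₊ : ℝ)) volume u v :=
    fun u v hu hv => (gInt0 u hu).symm.trans (gInt0 v hv)
  have NfunInt : ∀ u v : ℝ,
      IntervalIntegrable (fun s => (N ((n:ℝ)*μ*s) : ℝ)) volume u v := by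
    intro u v
    apply Monotone.intervalIntegrable
    intro x y hxy
    exact Nat.cast_le.2 (hNmono (mul_le_mul_of_nonneg_left hxy hc0.le))
  set K := ν J with hKdef
  have hb0 : (0:ℝ) ≤ (K:ℝ)/n := by positivity
  -- E1
  have piece1 : ∀ k : ℕ, IntervalIntegrable (fun s => (S ⌊(n:ℝ)*s⌋₊ : ℝ)) volume
      ((k:ℝ)/n) (((k+1:ℕ):ℝ)/n) ∧
      (∫ s in ((k:ℝ)/n)..(((k+1:ℕ):ℝ)/n), (S ⌊(n:ℝ)*s⌋₊ : ℝ)) = S k / n := by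
    intro k
    have hle : ((k:ℝ)/n) ≤ (((k+1:ℕ):ℝ)/n) := by
      apply (div_le_div_iff_of_pos_right hn0).2; push_cast; linarith
    have hco : ∀ s ∈ Set.Ioo ((k:ℝ)/n) (((k+1:ℕ):ℝ)/n), (S ⌊(n:ℝ)*s⌋₊ : ℝ) = S k := by
      intro s hs
      have h2 : s < ((k:ℝ)+1)/n := by
        have := hs.2; push_cast at this; exact this
      rw [floor_eq k s hs.1 h2]
    refine ⟨stepIntegrable hle hco, ?_⟩
    rw [stepIntegral hle hco]
    push_cast
    field_simp
    ring
  have E1 : (∫ s in (0:ℝ)..((K:ℝ)/n), (S ⌊(n:ℝ)*s⌋₊ : ℝ))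
      = (∑ k ∈ Finset.range K, S k) / n := by
    have hsum := intervalIntegral.sum_integral_adjacent_intervals
      (f := fun s => (S ⌊(n:ℝ)*s⌋₊ : ℝ)) (μ := volume)
      (a := fun k : ℕ => (k:ℝ)/n) (n := K) (fun k _ => (piece1 k).1)
    simp only [Nat.cast_zero, zero_div] at hsum
    rw [← hsum, Finset.sum_div]
    exact Finset.sum_congr rfl fun k _ => (piece1 k).2
  -- E2
  set A : ℕ → ℝ := fun k => min (S (ν k) / ((n:ℝ)*μ)) t with hAdef
  have hA0 : A 0 = 0 := by
    simp only [hAdef, hν0, hS0, zero_div]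
    exact min_eq_left ht0
  have hAJ : A J = t := by
    have h : t ≤ S (ν J) / ((n:ℝ)*μ) :=
      le_of_lt ((lt_div_iff₀ hc0).2 (by rw [mul_comm]; exact hJ_mem.2))
    exact min_eq_right h
  have hAk : ∀ k, k < J → A k = S (ν k) / ((n:ℝ)*μ) := by
    intro k hk
    exact min_eq_left ((div_le_iff₀ hc0).2 (by rw [mul_comm]; exact hJ_lb k hk))
  have hAmono : ∀ k : ℕ, A k ≤ A (k+1) := fun k =>
    min_le_min ((div_le_div_iff_of_pos_right hc0).2 (hHmono (Nat.le_succ k))) le_rfl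
  have piece2 : ∀ k, k < J →
      (∫ s in (A k)..(A (k+1)), (N ((n:ℝ)*μ*s):ℝ)) = (A (k+1) - A k) * (ν (k+1):ℝ) := by
    intro k hk
    apply stepIntegral (hAmono k)
    intro s hs
    have h1 : S (ν k) < (n:ℝ)*μ*s := by
      have hx := hs.1
      rw [hAk k hk] at hx
      have h := (div_lt_iff₀ hc0).1 hx
      rw [mul_comm] at h
      exact h
    have h2 : (n:ℝ)*μ*s < S (ν (k+1)) := by
      have h2' : s < S (ν (k+1))/((n:ℝ)*μ) := lt_of_lt_of_le hs.2 (min_le_left _ _)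
      have h := (lt_div_iff₀ hc0).1 h2'
      rw [mul_comm] at h
      exact h
    rw [hNchar ((n:ℝ)*μ*s) k h1.le h2]
  have E2 : (∫ s in (0:ℝ)..t, (N ((n:ℝ)*μ*s):ℝ))
      = ∑ k ∈ Finset.range J, (A (k+1) - A k) * (ν (k+1):ℝ) := by
    have hsum := intervalIntegral.sum_integral_adjacent_intervals
      (f := fun s => (N ((n:ℝ)*μ*s):ℝ)) (μ := volume) (a := A) (n := J)
      (fun k _ => NfunInt _ _)
    rw [hA0, hAJ] at hsum
    rw [← hsum]
    exact Finset.sum_congr rfl fun k hk => piece2 k (Finset.mem_range.1 hk)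
  have hJ'' : J - 1 + 1 = J := by omega
  have E2' : ∑ k ∈ Finset.range J, (A (k+1) - A k) * (ν (k+1):ℝ)
      = t * (K : ℝ)
        + (∑ k ∈ Finset.Icc 1 (J-1), S (ν k) * ((ν k : ℝ) - (ν (k+1) : ℝ))) / ((n:ℝ)*μ) := by
    have h := abelSum A (fun k => (ν k : ℝ)) (J-1)
    rw [hJ''] at h
    rw [h, hA0, hAJ, Finset.sum_div]
    have hcg : ∀ k ∈ Finset.Icc 1 (J-1), A k * ((ν k:ℝ) - (ν (k+1):ℝ))
        = S (ν k) * ((ν k : ℝ) - (ν (k+1) : ℝ)) / ((n:ℝ)*μ) := by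
      intro k hk
      obtain ⟨hk1, hk2⟩ := Finset.mem_Icc.1 hk
      rw [hAk k (by omega)]
      ring
    rw [Finset.sum_congr rfl hcg]
    ring
  -- integrability of Sbar, Nbar
  have SbarInt : ∀ u v : ℝ, 0 ≤ u → 0 ≤ v → IntervalIntegrable Sbar volume u v := by
    intro u v hu hv
    have hfun : Sbar = fun s => (S ⌊(n:ℝ)*s⌋₊ : ℝ) / ((n:ℝ)*μ) - s := funext hSbar
    rw [hfun]
    exact ((gInt u v hu hv).div_const _).sub (Continuous.intervalIntegrable continuous_id _ _)
  have NbarInt : ∀ u v : ℝ, IntervalIntegrable Nbar volume u v := by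
    intro u v
    have hfun : Nbar = fun s => (N ((n:ℝ)*μ*s):ℝ) / n - s :=
      funext fun s => by rw [hNbar s, hNn s]
    rw [hfun]
    exact ((NfunInt u v).div_const _).sub (Continuous.intervalIntegrable continuous_id _ _)
  -- assembly
  have hNnt : Nn t = (K:ℝ)/n := by rw [hNn t, hNct]
  have I1 : (∫ s in (0:ℝ)..t, (Sbar s + Nbar s))
      = (∫ s in (0:ℝ)..t, Sbar s) + ∫ s in (0:ℝ)..t, Nbar s :=
    intervalIntegral.integral_add (SbarInt 0 t le_rfl ht0) (NbarInt 0 t)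
  have I2 : (∫ s in (0:ℝ)..t, Sbar s)
      = (∫ s in (0:ℝ)..((K:ℝ)/n), Sbar s) + ∫ s in ((K:ℝ)/n)..t, Sbar s :=
    (intervalIntegral.integral_add_adjacent_intervals (SbarInt 0 _ le_rfl hb0)
      (SbarInt _ t hb0 ht0)).symm
  have I3 : (∫ s in ((K:ℝ)/n)..t, (Sbar s - Sbar t))
      = (∫ s in ((K:ℝ)/n)..t, Sbar s) - (t - (K:ℝ)/n) * Sbar t := by
    rw [intervalIntegral.integral_sub (SbarInt _ t hb0 ht0) intervalIntegrable_const,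
      intervalIntegral.integral_const, smul_eq_mul]
  have I4 : (∫ s in (0:ℝ)..((K:ℝ)/n), Sbar s)
      = (∑ k ∈ Finset.range K, S k) / n / ((n:ℝ)*μ) - ((K:ℝ)/n)^2/2 := by
    have h2 : IntervalIntegrable (fun s : ℝ => s) volume 0 ((K:ℝ)/n) :=
      Continuous.intervalIntegrable continuous_id _ _
    have h1 : IntervalIntegrable (fun s : ℝ => (S ⌊(n:ℝ)*s⌋₊ : ℝ) / ((n:ℝ)*μ)) volume 0 ((K:ℝ)/n) :=
      (gInt 0 ((K:ℝ)/n) le_rfl hb0).div_const ((n:ℝ)*μ)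
    have hsub := intervalIntegral.integral_sub h1 h2
    rw [intervalIntegral.integral_congr
      (g := fun s => (S ⌊(n:ℝ)*s⌋₊ : ℝ) / ((n:ℝ)*μ) - s) (fun s _ => hSbar s),
      hsub, intervalIntegral.integral_div, E1, integral_id]
    ring
  have I5 : (∫ s in (0:ℝ)..t, Nbar s)
      = (∑ k ∈ Finset.range J, (A (k+1) - A k) * (ν (k+1):ℝ)) / n - t^2/2 := by
    have h2 : IntervalIntegrable (fun s : ℝ => s) volume 0 t :=
      Continuous.intervalIntegrable continuous_id _ _
    have h1 : IntervalIntegrable (fun s : ℝ => (N ((n:ℝ)*μ*s):ℝ) / n) volume 0 t :=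
      (NfunInt 0 t).div_const _
    have hsub := intervalIntegral.integral_sub h1 h2
    rw [intervalIntegral.integral_congr
      (g := fun s => (N ((n:ℝ)*μ*s):ℝ) / n - s) (fun s _ => by rw [hNbar s, hNn s]),
      hsub, intervalIntegral.integral_div, E2, integral_id]
    ring
  have hkey := keyId hS0 hSX hν0 (fun i => (hν_mem i).1) J
  rw [hMn t, hNbar t, hNnt, I1, I2, I3, I4, I5, E2', ← hkey]
  have hn' : (n:ℝ) ≠ 0 := ne_of_gt hn0
  have hμ' : μ ≠ 0 := ne_of_gt hμ
  field_simp
  ring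
end
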